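/- In the setting of the previous confidence-calibrated ranking, if the event A = {|Δ_{iℓ} − Δ̂_{iℓ}| ≤ c·σ_{iℓ} for all i ≠ ℓ} has probability at least 1 − α, then with probability at least 1 − α, the set Î_k = {i ∈ S : R_i ≤ k} contains every i whose true rank r_i is at most k. -/
import Mathlib


open MeasureTheory

/-- Coverage guarantee for confidence-calibrated interview selection: if the simultaneous
confidence event has probability at least `1 − α`, then with probability at least `1 − α`
every candidate whose true rank `r_i` is at most `k` has calibrated lower-bound rank
`R_i` at most `k`, i.e. is included in the interview set `Î_k`. -/
theorem calibrated_selection_coverage {Ω S : Type*} [Fintype S] [DecidableEq S]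
    [MeasurableSpace Ω] (P : Measure Ω) [IsProbabilityMeasure P]
    (u : Ω → S → ℝ) (Δhat σ : Ω → S → S → ℝ) (c : ℝ) (k : ℕ) (α : ℝ)
    (hA : 1 - α ≤
      (P {ω | ∀ i ℓ : S, i ≠ ℓ →
        |(u ω i - u ω ℓ) - Δhat ω i ℓ| ≤ c * σ ω i ℓ}).toReal) :
    1 - α ≤
      (P {ω | ∀ i : S,
        1 + (Finset.univ.filter (fun ℓ : S => ℓ ≠ i ∧ u ω ℓ > u ω i)).card ≤ k →
        1 + (Finset.univ.filter (fun ℓ : S => ℓ ≠ i ∧ Δhat ω ℓ i > c * σ ω ℓ i)).card ≤ k}).toReal := by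
  refine le_trans hA ?_
  have hsub : {ω | ∀ i ℓ : S, i ≠ ℓ →
        |(u ω i - u ω ℓ) - Δhat ω i ℓ| ≤ c * σ ω i ℓ} ⊆
      {ω | ∀ i : S,
        1 + (Finset.univ.filter (fun ℓ : S => ℓ ≠ i ∧ u ω ℓ > u ω i)).card ≤ k →
        1 + (Finset.univ.filter (fun ℓ : S => ℓ ≠ i ∧ Δhat ω ℓ i > c * σ ω ℓ i)).card ≤ k} := by
    intro ω hω i hi
    refine le_trans ?_ hi
    have hcard : (Finset.univ.filter (fun ℓ : S => ℓ ≠ i ∧ Δhat ω ℓ i > c * σ ω ℓ i)).card ≤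
        (Finset.univ.filter (fun ℓ : S => ℓ ≠ i ∧ u ω ℓ > u ω i)).card := by
      apply Finset.card_le_card
      intro ℓ hℓ
      simp only [Finset.mem_filter, Finset.mem_univ, true_and] at hℓ ⊢
      obtain ⟨hne, hgt⟩ := hℓ
      refine ⟨hne, ?_⟩
      have habs := hω ℓ i hne
      have := abs_le.mp habs
      linarith [this.1]
    omega
  exact ENNReal.toReal_mono (measure_ne_top P _) (measure_mono hsub)
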